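/- Let K be an n×d real matrix with rows K_1,…,K_n, let S ⊆ {1,…,n}, and let 0 < δ₂ ≤ δ₁ ≤ 1/4 be real numbers. Assume K_i ≠ 0 for all i ∈ S, that for all distinct j, ℓ ∈ S, |⟨K_j, K_ℓ⟩| ≤ δ₁ · min(‖K_j‖₂², ‖K_ℓ‖₂²), and for all j ∈ S and ℓ ∉ S, |⟨K_ℓ, K_j⟩| ≤ δ₂ · min(‖K_j‖₂², ‖K_ℓ‖₂²). Let ρ = 1/(1 + δ₁²|S| + δ₂² n) and let U = { i ∈ {1,…,n} : σ_i(K) ≥ ρ }. Then S ⊆ U and |U| ≤ d·(1 + δ₁²|S| + δ₂² n). -/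

import Mathlib

/-- The leverage score of row `j` of an `n × d` real matrix `K`:
`σ_j(K) = sup { ⟨K_j, v⟩² / ∑_ℓ ⟨K_ℓ, v⟩² : v ∈ ℝ^d, Kv ≠ 0 }`. -/
noncomputable def levScore {n d : ℕ} (K : Matrix (Fin n) (Fin d) ℝ) (j : Fin n) : ℝ :=
  sSup {x : ℝ | ∃ v : Fin d → ℝ, K.mulVec v ≠ 0 ∧
    x = (∑ i, K j i * v i) ^ 2 / ∑ ℓ, (∑ i, K ℓ i * v i) ^ 2}

/-! Test the supremum defining `σ_i(K)`, `i ∈ S`, at `v = K_i`: the numerator is `‖K_i‖⁴`, and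
the correlation bounds give `∑_ℓ ⟨K_ℓ, K_i⟩² ≤ ‖K_i‖⁴ (1 + δ₁²|S| + δ₂²n)`, so `σ_i(K) ≥ ρ`.
Conversely, if `P` is the orthogonal projection of `ℝⁿ` onto the column space of `K`,
Cauchy–Schwarz gives `σ_j(K) ≤ ‖P e_j‖²`, and `∑_j ‖P e_j‖² = tr P = rank K ≤ d`; hence at most
`d / ρ` rows have leverage score `≥ ρ`. -/

open scoped InnerProductSpace Matrix
open Finset

namespace Submodule

variable {𝕜 E : Type*} [RCLike 𝕜] [NormedAddCommGroup E] [InnerProductSpace 𝕜 E]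
  (U : Submodule 𝕜 E) [U.HasOrthogonalProjection]

theorem norm_inner_le_norm_starProjection_mul_norm (x : E) {w : E} (hw : w ∈ U) :
    ‖⟪x, w⟫_𝕜‖ ≤ ‖U.starProjection x‖ * ‖w‖ := by
  calc ‖⟪x, w⟫_𝕜‖ = ‖⟪U.starProjection x, w⟫_𝕜‖ := by
        rw [inner_starProjection_left_eq_right, starProjection_eq_self_iff.mpr hw]
    _ ≤ _ := norm_inner_le_norm _ _

theorem inner_starProjection_self_eq_norm_sq (x : E) :
    ⟪x, U.starProjection x⟫_𝕜 = (‖U.starProjection x‖ : 𝕜) ^ 2 := by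
  rw [← inner_self_eq_norm_sq_to_K, inner_starProjection_left_eq_right,
    starProjection_eq_self_iff.mpr (U.starProjection_apply_mem x)]

theorem isProj_starProjection : LinearMap.IsProj U (U.starProjection : E →ₗ[𝕜] E) :=
  ⟨U.starProjection_apply_mem, fun _ hx => starProjection_eq_self_iff.mpr hx⟩

theorem sum_norm_starProjection_sq [FiniteDimensional 𝕜 E] {ι : Type*} [Fintype ι]
    (b : OrthonormalBasis ι 𝕜 E) :
    ∑ i, ‖U.starProjection (b i)‖ ^ 2 = Module.finrank 𝕜 U := by
  apply RCLike.ofReal_injective (K := 𝕜)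
  push_cast
  rw [← U.isProj_starProjection.trace, LinearMap.trace_eq_sum_inner _ b]
  simp only [ContinuousLinearMap.coe_coe, inner_starProjection_self_eq_norm_sq]

end Submodule

theorem sq_le_mul_sq_of_abs_le_mul {c δ m a : ℝ} (h : |c| ≤ δ * m) (hm : 0 ≤ m) (hma : m ≤ a) :
    c ^ 2 ≤ δ ^ 2 * a ^ 2 :=
  calc c ^ 2 = |c| ^ 2 := (sq_abs c).symm
    _ ≤ (δ * m) ^ 2 := pow_le_pow_left₀ (abs_nonneg c) h 2
    _ ≤ δ ^ 2 * a ^ 2 := by rw [mul_pow]; gcongr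

theorem sum_sq_dotProduct_le {ι κ : Type*} [Fintype ι] [Fintype κ] [DecidableEq ι]
    (K : Matrix ι κ ℝ) {S : Finset ι} {i : ι} (hi : i ∈ S) {δ₁ δ₂ : ℝ}
    (hS : ∀ ℓ ∈ S, ℓ ≠ i → (K ℓ ⬝ᵥ K i) ^ 2 ≤ δ₁ ^ 2 * (K i ⬝ᵥ K i) ^ 2)
    (hSc : ∀ ℓ ∉ S, (K ℓ ⬝ᵥ K i) ^ 2 ≤ δ₂ ^ 2 * (K i ⬝ᵥ K i) ^ 2) :
    ∑ ℓ, (K ℓ ⬝ᵥ K i) ^ 2 ≤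
      (K i ⬝ᵥ K i) ^ 2 * (1 + δ₁ ^ 2 * #S + δ₂ ^ 2 * Fintype.card ι) := by
  set f := fun ℓ => (K ℓ ⬝ᵥ K i) ^ 2
  set A := (K i ⬝ᵥ K i) ^ 2
  have hS' : ∑ ℓ ∈ S.erase i, f ℓ ≤ #S * (δ₁ ^ 2 * A) :=
    calc ∑ ℓ ∈ S.erase i, f ℓ ≤ #(S.erase i) * (δ₁ ^ 2 * A) := by
          simpa only [nsmul_eq_mul] using sum_le_card_nsmul (S.erase i) f _ fun ℓ hℓ =>
            hS ℓ (mem_of_mem_erase hℓ) (ne_of_mem_erase hℓ)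
      _ ≤ #S * (δ₁ ^ 2 * A) := by gcongr; exact erase_subset i S
  have hSc' : ∑ ℓ ∈ Sᶜ, f ℓ ≤ Fintype.card ι * (δ₂ ^ 2 * A) :=
    calc ∑ ℓ ∈ Sᶜ, f ℓ ≤ #Sᶜ * (δ₂ ^ 2 * A) := by
          simpa only [nsmul_eq_mul] using
            sum_le_card_nsmul Sᶜ f _ fun ℓ hℓ => hSc ℓ (mem_compl.mp hℓ)
      _ ≤ Fintype.card ι * (δ₂ ^ 2 * A) := by gcongr; exact card_le_univ _
  calc ∑ ℓ, f ℓ = f i + ∑ ℓ ∈ S.erase i, f ℓ + ∑ ℓ ∈ Sᶜ, f ℓ := by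
        rw [add_sum_erase S f hi, sum_add_sum_compl]
    _ ≤ A * (1 + δ₁ ^ 2 * #S + δ₂ ^ 2 * Fintype.card ι) := by
        linarith

section LeverageScore

variable {n d : ℕ} (K : Matrix (Fin n) (Fin d) ℝ)

theorem ratio_le_norm_starProjection_sq (j : Fin n) {v : Fin d → ℝ} (hv : K *ᵥ v ≠ 0) :
    (∑ i, K j i * v i) ^ 2 / ∑ ℓ, (∑ i, K ℓ i * v i) ^ 2 ≤
      ‖(LinearMap.range K.toEuclideanLin).starProjection (EuclideanSpace.single j 1)‖ ^ 2 := by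
  set w := K.toEuclideanLin (WithLp.toLp 2 v)
  have hw : ∀ ℓ, w ℓ = ∑ i, K ℓ i * v i := fun _ => rfl
  have hnorm : ‖w‖ ^ 2 = ∑ ℓ, (∑ i, K ℓ i * v i) ^ 2 := by
    simp only [EuclideanSpace.real_norm_sq_eq, hw]
  have hw0 : 0 < ‖w‖ := norm_pos_iff.mpr fun h => hv (funext fun ℓ => congr($h ℓ))
  have hCS := (LinearMap.range K.toEuclideanLin).norm_inner_le_norm_starProjection_mul_norm
    (𝕜 := ℝ) (EuclideanSpace.single j 1) (LinearMap.mem_range_self _ (WithLp.toLp 2 v))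
  rw [EuclideanSpace.inner_single_left, hw] at hCS
  rw [← hnorm, div_le_iff₀ (by positivity), ← mul_pow, ← sq_abs]
  simp only [Real.ringHom_apply, one_mul, Real.norm_eq_abs] at hCS
  exact pow_le_pow_left₀ (abs_nonneg _) hCS 2

theorem levScore_le_norm_starProjection_sq (j : Fin n) :
    levScore K j ≤
      ‖(LinearMap.range K.toEuclideanLin).starProjection (EuclideanSpace.single j 1)‖ ^ 2 :=
  Real.sSup_le (by rintro _ ⟨v, hv, rfl⟩; exact ratio_le_norm_starProjection_sq K j hv)
    (sq_nonneg _)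

theorem ratio_le_levScore (j : Fin n) {v : Fin d → ℝ} (hv : K *ᵥ v ≠ 0) :
    (∑ i, K j i * v i) ^ 2 / ∑ ℓ, (∑ i, K ℓ i * v i) ^ 2 ≤ levScore K j :=
  le_csSup ⟨_, by rintro _ ⟨u, hu, rfl⟩; exact ratio_le_norm_starProjection_sq K j hu⟩ ⟨v, hv, rfl⟩

theorem levScore_nonneg (j : Fin n) : 0 ≤ levScore K j :=
  Real.sSup_nonneg (by rintro _ ⟨v, -, rfl⟩; positivity)

theorem sum_levScore_le : ∑ j, levScore K j ≤ d := by
  calc ∑ j, levScore K j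
      ≤ ∑ j, ‖(LinearMap.range K.toEuclideanLin).starProjection
          (EuclideanSpace.basisFun (Fin n) ℝ j)‖ ^ 2 := by
        gcongr with j
        simpa using levScore_le_norm_starProjection_sq K j
    _ = Module.finrank ℝ (LinearMap.range K.toEuclideanLin) :=
        Submodule.sum_norm_starProjection_sq _ _
    _ ≤ d := by
        exact_mod_cast (LinearMap.finrank_range_le _).trans_eq (finrank_euclideanSpace_fin)

theorem card_filter_le_levScore_mul_le (ρ : ℝ) :
    #{j | ρ ≤ levScore K j} * ρ ≤ d := by
  calc #{j | ρ ≤ levScore K j} * ρ ≤ ∑ j with ρ ≤ levScore K j, levScore K j := by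
        simpa only [nsmul_eq_mul] using card_nsmul_le_sum _ _ ρ (fun j hj => (mem_filter.mp hj).2)
    _ ≤ ∑ j, levScore K j :=
        sum_le_sum_of_subset_of_nonneg (subset_univ _) fun j _ _ => levScore_nonneg K j
    _ ≤ d := sum_levScore_le K

theorem one_div_le_levScore_of_sum_sq_dotProduct_le {i : Fin n} {C : ℝ} (hKi : K i ≠ 0)
    (h : ∑ ℓ, (K ℓ ⬝ᵥ K i) ^ 2 ≤ (K i ⬝ᵥ K i) ^ 2 * C) : 1 / C ≤ levScore K i := by
  have hA : K i ⬝ᵥ K i ≠ 0 := dotProduct_self_eq_zero.not.mpr hKi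
  have hA2 : 0 < (K i ⬝ᵥ K i) ^ 2 := by positivity
  have hD : (K i ⬝ᵥ K i) ^ 2 ≤ ∑ ℓ, (K ℓ ⬝ᵥ K i) ^ 2 :=
    single_le_sum (f := fun ℓ => (K ℓ ⬝ᵥ K i) ^ 2) (fun _ _ => sq_nonneg _) (mem_univ i)
  have hC : 0 < C := by nlinarith
  calc 1 / C ≤ (K i ⬝ᵥ K i) ^ 2 / ∑ ℓ, (K ℓ ⬝ᵥ K i) ^ 2 := by
        rw [div_le_div_iff₀ hC (by linarith)]
        linarith
    _ ≤ levScore K i := ratio_le_levScore K i (v := K i) fun h0 => hA congr($h0 i)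

end LeverageScore

theorem planted_model_universal_set_general {n d : ℕ} (K : Matrix (Fin n) (Fin d) ℝ)
    (S : Finset (Fin n)) (δ₁ δ₂ : ℝ)
    (hK0 : ∀ i ∈ S, (K i : Fin d → ℝ) ≠ 0)
    (hSS : ∀ j ∈ S, ∀ ℓ ∈ S, j ≠ ℓ →
      |∑ i, K j i * K ℓ i| ≤ δ₁ * min (∑ i, K j i ^ 2) (∑ i, K ℓ i ^ 2))
    (hSc : ∀ j ∈ S, ∀ ℓ, ℓ ∉ S →
      |∑ i, K ℓ i * K j i| ≤ δ₂ * min (∑ i, K j i ^ 2) (∑ i, K ℓ i ^ 2)) :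
    S ⊆ (Finset.univ.filter fun i : Fin n =>
        1 / (1 + δ₁ ^ 2 * S.card + δ₂ ^ 2 * n) ≤ levScore K i) ∧
    (((Finset.univ.filter fun i : Fin n =>
        1 / (1 + δ₁ ^ 2 * S.card + δ₂ ^ 2 * n) ≤ levScore K i).card : ℝ) ≤
      d * (1 + δ₁ ^ 2 * S.card + δ₂ ^ 2 * n)) := by
  have hsq : ∀ i, ∑ x, K i x ^ 2 = K i ⬝ᵥ K i := fun i => by simp only [dotProduct, sq]
  refine ⟨fun i hi => mem_filter.mpr ⟨mem_univ i, ?_⟩, ?_⟩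
  · refine one_div_le_levScore_of_sum_sq_dotProduct_le K (hK0 i hi) ?_
    have hrow := sum_sq_dotProduct_le K hi
      (fun ℓ hℓ hℓi => by
        rw [← hsq]
        exact sq_le_mul_sq_of_abs_le_mul (hSS ℓ hℓ i hi hℓi) (by positivity) (min_le_right _ _))
      (fun ℓ hℓ => by
        rw [← hsq]
        exact sq_le_mul_sq_of_abs_le_mul (hSc i hi ℓ hℓ) (by positivity) (min_le_left _ _))
    rwa [Fintype.card_fin] at hrow
  · have hC : 0 < 1 + δ₁ ^ 2 * S.card + δ₂ ^ 2 * n := by positivity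
    have hcard := card_filter_le_levScore_mul_le K (1 / (1 + δ₁ ^ 2 * S.card + δ₂ ^ 2 * n))
    rwa [mul_one_div, div_le_iff₀ hC] at hcard

/-- In the planted model, with `ρ = 1/(1 + δ₁²|S| + δ₂²n)` and
`U = { i : σ_i(K) ≥ ρ }`, we have `S ⊆ U` and `|U| ≤ d(1 + δ₁²|S| + δ₂²n)`. -/
theorem planted_model_universal_set {n d : ℕ} (K : Matrix (Fin n) (Fin d) ℝ)
    (S : Finset (Fin n)) (δ₁ δ₂ : ℝ) (hδ₂ : 0 < δ₂) (hδ₂₁ : δ₂ ≤ δ₁) (hδ₁ : δ₁ ≤ 1 / 4)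
    (hK0 : ∀ i ∈ S, (K i : Fin d → ℝ) ≠ 0)
    (hSS : ∀ j ∈ S, ∀ ℓ ∈ S, j ≠ ℓ →
      |∑ i, K j i * K ℓ i| ≤ δ₁ * min (∑ i, K j i ^ 2) (∑ i, K ℓ i ^ 2))
    (hSc : ∀ j ∈ S, ∀ ℓ, ℓ ∉ S →
      |∑ i, K ℓ i * K j i| ≤ δ₂ * min (∑ i, K j i ^ 2) (∑ i, K ℓ i ^ 2)) :
    S ⊆ (Finset.univ.filter fun i : Fin n =>
        1 / (1 + δ₁ ^ 2 * S.card + δ₂ ^ 2 * n) ≤ levScore K i) ∧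
    (((Finset.univ.filter fun i : Fin n =>
        1 / (1 + δ₁ ^ 2 * S.card + δ₂ ^ 2 * n) ≤ levScore K i).card : ℝ) ≤
      d * (1 + δ₁ ^ 2 * S.card + δ₂ ^ 2 * n)) :=
  planted_model_universal_set_general K S δ₁ δ₂ hK0 hSS hSc
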